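/- Deleting one cost changes the regularized virtual cost by at most a factor of 2: for every index i with 1 ≤ i ≤ m and i ≠ k, one has (1/2)·φ_1(c_i) ≤ φ_2(c_i) ≤ 2·φ_1(c_i). -/

import Mathlib

/-- Virtual cost of the uniform distribution over a sorted list `(d 1, …, d r)`:
`ψ j = j·d j − (j−1)·d (j−1)`. -/
noncomputable def vc (d : ℕ → ℝ) (j : ℕ) : ℝ :=
  (j : ℝ) * d j - ((j : ℝ) - 1) * d (j - 1)

/-- `Avg(l,k') = (1/(k'−l+1))·Σ_{t=l}^{k'} ψ_t`. -/
noncomputable def avg (d : ℕ → ℝ) (l k' : ℕ) : ℝ :=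
  (∑ t ∈ Finset.Icc l k', vc d t) / ((k' : ℝ) - (l : ℝ) + 1)

/-- `ψ'_l = min_{l ≤ k' ≤ r} Avg(l,k')`. -/
noncomputable def rvcAux (r : ℕ) (d : ℕ → ℝ) (l : ℕ) : ℝ :=
  sInf {x | ∃ k', l ≤ k' ∧ k' ≤ r ∧ x = avg d l k'}

/-- Regularized virtual cost of the sorted list `(d 1, …, d r)`:
`φ_j = max_{1 ≤ l ≤ j} ψ'_l`. -/
noncomputable def rvc (r : ℕ) (d : ℕ → ℝ) (j : ℕ) : ℝ :=
  sSup {x | ∃ l, 1 ≤ l ∧ l ≤ j ∧ x = rvcAux r d l}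

/-- The sorted list `T₁` obtained from `(c 1, …, c m)` by deleting `c k`. -/
noncomputable def delList (k : ℕ) (c : ℕ → ℝ) (j : ℕ) : ℝ :=
  if j < k then c j else c (j + 1)

/-- `φ₁(c i)`: the regularized virtual cost of `T₁` at the position of `c i`
within `T₁` (position `i` for `i < k`, position `i − 1` for `i > k`). -/
noncomputable def rvcDel (m k : ℕ) (c : ℕ → ℝ) (i : ℕ) : ℝ :=
  rvc (m - 1) (delList k c) (if i < k then i else i - 1)

/-!
Telescoping the virtual costs shows that the average of `ψ_{p+1}, …, ψ_q` is the slope of the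
chord of `j ↦ j · d_j` between `p` and `q`. Deleting `c_k` shifts every index above `k` down by
one, so each chord of `T₁` can be compared with a chord of `T₂` whose endpoints are moved by at
most one index, and for sorted nonnegative lists such a move changes the slope by at most a
factor 2. The min–max formula transfers these bounds to the regularized virtual costs. The only
delicate case is the starting index `k` of `T₁`: it is compared with the starting index `k` or
`k + 1` of `T₂`, according to whether or not `2 ψ_k` bounds its value.
-/

noncomputable def chordSlope (p q a b : ℝ) : ℝ := (q * b - p * a) / (q - p)

section ChordSlope

variable {p q a b x : ℝ}

lemma le_chordSlope (hp : 0 ≤ p) (hpq : p < q) (hab : a ≤ b) : b ≤ chordSlope p q a b := by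
  rw [chordSlope, le_div_iff₀ (by linarith)]; nlinarith

lemma chordSlope_le_chordSlope_right (hp : 0 ≤ p) (hpq : p < q) (hbx : b ≤ x) :
    chordSlope p q a b ≤ chordSlope p q a x := by
  unfold chordSlope; gcongr; linarith

lemma chordSlope_le_chordSlope_left (hp : 0 ≤ p) (hpq : p < q) (hxa : x ≤ a) :
    chordSlope p q a b ≤ chordSlope p q x b := by
  unfold chordSlope; gcongr

lemma chordSlope_succ_le (hp : 0 ≤ p) (hpq : p < q) (hab : a ≤ b) :
    chordSlope p (q + 1) a b ≤ chordSlope p q a b := by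
  unfold chordSlope
  rw [div_le_div_iff₀ (by linarith) (by linarith)]; nlinarith [mul_nonneg hp (sub_nonneg.2 hab)]

lemma chordSlope_le_two_mul_chordSlope_succ (hp : 0 ≤ p) (hpq : p + 1 ≤ q) (hab : a ≤ b)
    (hb : 0 ≤ b) : chordSlope p q a b ≤ 2 * chordSlope p (q + 1) a b := by
  unfold chordSlope
  rw [← mul_div_assoc, div_le_div_iff₀ (by linarith) (by linarith)]
  nlinarith [mul_nonneg (mul_nonneg hp (sub_nonneg.2 hab)) (by linarith : (0 : ℝ) ≤ q - p - 1),
    mul_nonneg hb (by linarith : (0 : ℝ) ≤ q - p)]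

lemma chordSlope_le_chordSlope_succ_succ (hpq : p < q) (hab : a ≤ b) :
    chordSlope p q a b ≤ chordSlope (p + 1) (q + 1) a b := by
  unfold chordSlope
  rw [show q + 1 - (p + 1) = q - p by ring]
  exact div_le_div_of_nonneg_right (by linarith) (by linarith)

lemma chordSlope_succ_succ_le_two_mul (hp : 0 ≤ p) (hpq : p + 1 ≤ q) (ha : 0 ≤ a)
    (hab : a ≤ b) : chordSlope (p + 1) (q + 1) a b ≤ 2 * chordSlope p q a b := by
  unfold chordSlope
  rw [show q + 1 - (p + 1) = q - p by ring, ← mul_div_assoc]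
  refine div_le_div_of_nonneg_right ?_ (by linarith)
  nlinarith [mul_nonneg hp (sub_nonneg.2 hab),
    mul_nonneg (by linarith : (0 : ℝ) ≤ q - 1 - p) (ha.trans hab)]

lemma chordSlope_le_two_mul_chordSlope_succ_succ (hp : 0 ≤ p) (hpq : p + 1 ≤ q) (hab : a ≤ b)
    (hb : 0 ≤ b) (h : 2 * chordSlope p (p + 1) a x ≤ chordSlope p q a b) :
    chordSlope p q a b ≤ 2 * chordSlope (p + 1) (q + 1) x b := by
  have hv : chordSlope p (p + 1) a x = (p + 1) * x - p * a := by simp [chordSlope]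
  rw [hv] at h
  set S := chordSlope p q a b with hS_def
  have hS : 0 ≤ S := hb.trans (le_chordSlope hp (by linarith) hab)
  have hD : (q - p) * S = q * b - p * a := by
    rw [hS_def, chordSlope]; field_simp [show q - p ≠ 0 by linarith]
  -- after clearing denominators, `h` reduces the claim to `0 ≤ (q - p - 1) * S + 2 * b`
  rw [chordSlope, show q + 1 - (p + 1) = q - p by ring, ← mul_div_assoc,
    le_div_iff₀ (by linarith)]
  nlinarith [mul_nonneg hS (by linarith : (0 : ℝ) ≤ q - p - 1)]

end ChordSlope

lemma sum_vc_Icc (d : ℕ → ℝ) {p q : ℕ} (hpq : p ≤ q) :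
    ∑ t ∈ Finset.Icc (p + 1) q, vc d t = q * d q - p * d p := by
  induction q, hpq using Nat.le_induction with
  | base => simp
  | succ q hpq ih =>
    rw [Finset.sum_Icc_succ_top (by omega), ih, vc, Nat.add_sub_cancel]
    push_cast
    ring

lemma avg_eq_chordSlope (d : ℕ → ℝ) {p q : ℕ} (hpq : p < q) :
    avg d (p + 1) q = chordSlope p q (d p) (d q) := by
  rw [avg, sum_vc_Icc d hpq.le, chordSlope]
  push_cast
  ring_nf

lemma avg_delList_of_lt {k l j : ℕ} (c : ℕ → ℝ) (hjk : j < k) :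
    avg (delList k c) l j = avg c l j := by
  unfold avg
  congr 1
  refine Finset.sum_congr rfl fun t ht => ?_
  have ht : t ≤ j := (Finset.mem_Icc.1 ht).2
  simp only [vc, delList, if_pos (show t < k by omega), if_pos (show t - 1 < k by omega)]

section MinMax

variable {r : ℕ} {d : ℕ → ℝ} {l j : ℕ} {x C : ℝ}

lemma rvcAux_le_avg (hlj : l ≤ j) (hjr : j ≤ r) : rvcAux r d l ≤ avg d l j := by
  refine csInf_le (Set.Finite.bddBelow ?_) ⟨j, hlj, hjr, rfl⟩
  refine ((Set.finite_Icc l r).image (avg d l)).subset ?_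
  rintro _ ⟨j, h₁, h₂, rfl⟩
  exact ⟨j, ⟨h₁, h₂⟩, rfl⟩

lemma le_rvcAux (hlr : l ≤ r) (h : ∀ j, l ≤ j → j ≤ r → x ≤ avg d l j) :
    x ≤ rvcAux r d l := by
  refine le_csInf ⟨avg d l l, l, le_rfl, hlr, rfl⟩ ?_
  rintro _ ⟨j, h₁, h₂, rfl⟩
  exact h j h₁ h₂

lemma le_mul_rvcAux (hC : 0 < C) (hlr : l ≤ r)
    (h : ∀ j, l ≤ j → j ≤ r → x ≤ C * avg d l j) :
    x ≤ C * rvcAux r d l := by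
  rw [← div_le_iff₀' hC]
  exact le_rvcAux hlr fun j h₁ h₂ => (div_le_iff₀' hC).2 (h j h₁ h₂)

lemma rvcAux_le_rvc (hl : 1 ≤ l) (hlj : l ≤ j) : rvcAux r d l ≤ rvc r d j := by
  refine le_csSup (Set.Finite.bddAbove ?_) ⟨l, hl, hlj, rfl⟩
  refine ((Set.finite_Icc 1 j).image (rvcAux r d)).subset ?_
  rintro _ ⟨l, h₁, h₂, rfl⟩
  exact ⟨l, ⟨h₁, h₂⟩, rfl⟩

lemma rvc_le (hj : 1 ≤ j) (h : ∀ l, 1 ≤ l → l ≤ j → rvcAux r d l ≤ x) :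
    rvc r d j ≤ x := by
  refine csSup_le ⟨rvcAux r d 1, 1, le_rfl, hj, rfl⟩ ?_
  rintro _ ⟨l, h₁, h₂, rfl⟩
  exact h l h₁ h₂

lemma avg_nonneg (hd0 : 0 ≤ d 0) (hd : MonotoneOn d (Set.Iic r)) (hl : 1 ≤ l) (hlj : l ≤ j)
    (hjr : j ≤ r) : 0 ≤ avg d l j := by
  obtain ⟨p, rfl⟩ : ∃ p, l = p + 1 := ⟨l - 1, by omega⟩
  rw [avg_eq_chordSlope d (by omega)]
  have hdp : d p ≤ d j := hd (Set.mem_Iic.2 (by omega)) (Set.mem_Iic.2 hjr) (by omega)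
  have hdj : d 0 ≤ d j := hd (Set.mem_Iic.2 (by omega)) (Set.mem_Iic.2 hjr) (by omega)
  exact (hd0.trans hdj).trans
    (le_chordSlope (Nat.cast_nonneg p) (by exact_mod_cast (by omega : p < j)) hdp)

lemma rvcAux_nonneg (hd0 : 0 ≤ d 0) (hd : MonotoneOn d (Set.Iic r)) (hl : 1 ≤ l)
    (hlr : l ≤ r) : 0 ≤ rvcAux r d l :=
  le_rvcAux hlr fun _ h₁ h₂ => avg_nonneg hd0 hd hl h₁ h₂

end MinMax

section Deletion

variable {m k : ℕ} {c : ℕ → ℝ}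

lemma delList_of_lt {j : ℕ} (h : j < k) : delList k c j = c j := if_pos h

lemma delList_of_le {j : ℕ} (h : k ≤ j) : delList k c j = c (j + 1) := if_neg (by omega)

lemma le_delList (hc : MonotoneOn c (Set.Iic m)) {j : ℕ} (hj : j < m) :
    c j ≤ delList k c j := by
  unfold delList
  split_ifs
  · exact le_rfl
  · exact hc (Set.mem_Iic.2 hj.le) (Set.mem_Iic.2 hj) (Nat.le_succ j)

lemma delList_le (hc : MonotoneOn c (Set.Iic m)) {j : ℕ} (hj : j < m) :
    delList k c j ≤ c (j + 1) := by
  unfold delList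
  split_ifs
  · exact hc (Set.mem_Iic.2 hj.le) (Set.mem_Iic.2 hj) (Nat.le_succ j)
  · exact le_rfl

lemma monotoneOn_delList (hc : MonotoneOn c (Set.Iic m)) :
    MonotoneOn (delList k c) (Set.Iic (m - 1)) := by
  intro a ha b hb hab
  simp only [Set.mem_Iic] at ha hb
  rcases hab.eq_or_lt with rfl | hab
  · exact le_rfl
  unfold delList
  split_ifs <;> exact hc (Set.mem_Iic.2 (by omega)) (Set.mem_Iic.2 (by omega)) (by omega)

end Deletion

section Comparison

variable {m k : ℕ} {c : ℕ → ℝ}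

lemma rvcAux_le_rvcAux_delList (hc : MonotoneOn c (Set.Iic m)) (hkm : k < m) {l : ℕ}
    (hl : 1 ≤ l) (hlk : l ≤ k) : rvcAux m c l ≤ rvcAux (m - 1) (delList k c) l := by
  refine le_rvcAux (by omega) fun j hlj hjm => ?_
  rcases lt_or_ge j k with hjk | hkj
  · rw [avg_delList_of_lt c hjk]
    exact rvcAux_le_avg hlj (by omega)
  obtain ⟨p, rfl⟩ : ∃ p, l = p + 1 := ⟨l - 1, by omega⟩
  have hpj : (p : ℝ) < j := by exact_mod_cast (by omega : p < j)
  calc rvcAux m c (p + 1)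
      ≤ avg c (p + 1) (j + 1) := rvcAux_le_avg (by omega) (by omega)
    _ = chordSlope p (j + 1) (c p) (c (j + 1)) := by
      rw [avg_eq_chordSlope c (by omega)]; push_cast; rfl
    _ ≤ chordSlope p j (c p) (c (j + 1)) :=
      chordSlope_succ_le (Nat.cast_nonneg p) hpj
        (hc (Set.mem_Iic.2 (by omega)) (Set.mem_Iic.2 (by omega)) (by omega))
    _ = avg (delList k c) (p + 1) j := by
      rw [avg_eq_chordSlope _ (by omega), delList_of_lt (by omega), delList_of_le hkj]

lemma rvcAux_succ_le_two_mul_rvcAux_delList (hc0 : 0 ≤ c 0) (hc : MonotoneOn c (Set.Iic m))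
    {l : ℕ} (hl : 1 ≤ l) (hkl : k ≤ l) (hlm : l < m) :
    rvcAux m c (l + 1) ≤ 2 * rvcAux (m - 1) (delList k c) l := by
  refine le_mul_rvcAux two_pos (by omega) fun j hlj hjm => ?_
  obtain ⟨p, rfl⟩ : ∃ p, l = p + 1 := ⟨l - 1, by omega⟩
  have hp : 0 ≤ delList k c p :=
    (hc0.trans (hc (Set.mem_Iic.2 (by omega)) (Set.mem_Iic.2 (by omega)) (by omega))).trans
      (le_delList hc (by omega))
  have hpc : delList k c p ≤ c (p + 1) := delList_le hc (by omega)
  have hpj : (p : ℝ) + 1 ≤ j := by exact_mod_cast (by omega : p + 1 ≤ j)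
  calc rvcAux m c (p + 1 + 1)
      ≤ avg c (p + 1 + 1) (j + 1) := rvcAux_le_avg (by omega) (by omega)
    _ = chordSlope (p + 1) (j + 1) (c (p + 1)) (c (j + 1)) := by
      rw [avg_eq_chordSlope c (by omega)]; push_cast; rfl
    _ ≤ chordSlope (p + 1) (j + 1) (delList k c p) (c (j + 1)) :=
      chordSlope_le_chordSlope_left (by positivity) (by linarith) hpc
    _ ≤ 2 * chordSlope p j (delList k c p) (c (j + 1)) :=
      chordSlope_succ_succ_le_two_mul (Nat.cast_nonneg p) hpj hp
        (hpc.trans (hc (Set.mem_Iic.2 (by omega)) (Set.mem_Iic.2 (by omega)) (by omega)))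
    _ = 2 * avg (delList k c) (p + 1) j := by
      rw [avg_eq_chordSlope _ (by omega), delList_of_le (j := j) (by omega)]

lemma rvcAux_delList_le_two_mul_rvcAux_of_le_avg (hc0 : 0 ≤ c 0) (hc : MonotoneOn c (Set.Iic m))
    {l : ℕ} (hl : 1 ≤ l) (hlk : l ≤ k) (hkm : k < m)
    (h : rvcAux (m - 1) (delList k c) l ≤ 2 * avg c l l) :
    rvcAux (m - 1) (delList k c) l ≤ 2 * rvcAux m c l := by
  refine le_mul_rvcAux two_pos (by omega) fun j hlj hjm => ?_
  rcases hlj.eq_or_lt with rfl | hlj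
  · exact h
  obtain ⟨p, rfl⟩ : ∃ p, l = p + 1 := ⟨l - 1, by omega⟩
  obtain ⟨q, rfl⟩ : ∃ q, j = q + 1 := ⟨j - 1, by omega⟩
  have hpq : (p : ℝ) + 1 ≤ q := by exact_mod_cast (by omega : p + 1 ≤ q)
  have hcpq : c p ≤ c (q + 1) := hc (Set.mem_Iic.2 (by omega)) (Set.mem_Iic.2 hjm) (by omega)
  have hcq : 0 ≤ c (q + 1) :=
    hc0.trans (hc (Set.mem_Iic.2 (by omega)) (Set.mem_Iic.2 hjm) (by omega))
  calc rvcAux (m - 1) (delList k c) (p + 1)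
      ≤ avg (delList k c) (p + 1) q := rvcAux_le_avg (by omega) (by omega)
    _ = chordSlope p q (c p) (delList k c q) := by
      rw [avg_eq_chordSlope _ (by omega), delList_of_lt (by omega)]
    _ ≤ chordSlope p q (c p) (c (q + 1)) :=
      chordSlope_le_chordSlope_right (Nat.cast_nonneg p) (by linarith) (delList_le hc (by omega))
    _ ≤ 2 * chordSlope p (q + 1) (c p) (c (q + 1)) :=
      chordSlope_le_two_mul_chordSlope_succ (Nat.cast_nonneg p) hpq hcpq hcq
    _ = 2 * avg c (p + 1) (q + 1) := by
      rw [avg_eq_chordSlope c (by omega)]; push_cast; rfl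

lemma rvcAux_delList_le_two_mul_rvcAux_of_lt (hc0 : 0 ≤ c 0) (hc : MonotoneOn c (Set.Iic m))
    {l : ℕ} (hl : 1 ≤ l) (hlk : l < k) (hkm : k < m) :
    rvcAux (m - 1) (delList k c) l ≤ 2 * rvcAux m c l := by
  refine rvcAux_delList_le_two_mul_rvcAux_of_le_avg hc0 hc hl hlk.le hkm ?_
  have hpos : 0 ≤ avg c l l := avg_nonneg hc0 hc hl le_rfl (by omega)
  calc rvcAux (m - 1) (delList k c) l
      ≤ avg (delList k c) l l := rvcAux_le_avg le_rfl (by omega)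
    _ = avg c l l := avg_delList_of_lt c hlk
    _ ≤ 2 * avg c l l := by linarith

lemma rvcAux_delList_le_two_mul_rvcAux_succ (hc0 : 0 ≤ c 0) (hc : MonotoneOn c (Set.Iic m))
    (hk : 1 ≤ k) (hkm : k < m) (h : 2 * avg c k k ≤ rvcAux (m - 1) (delList k c) k) :
    rvcAux (m - 1) (delList k c) k ≤ 2 * rvcAux m c (k + 1) := by
  refine le_mul_rvcAux two_pos (by omega) fun j hkj hjm => ?_
  obtain ⟨p, rfl⟩ : ∃ p, k = p + 1 := ⟨k - 1, by omega⟩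
  obtain ⟨q, rfl⟩ : ∃ q, j = q + 1 := ⟨j - 1, by omega⟩
  have hpq : (p : ℝ) + 1 ≤ q := by exact_mod_cast (by omega : p + 1 ≤ q)
  have hcpq : c p ≤ c (q + 1) := hc (Set.mem_Iic.2 (by omega)) (Set.mem_Iic.2 hjm) (by omega)
  have hcq : 0 ≤ c (q + 1) :=
    hc0.trans (hc (Set.mem_Iic.2 (by omega)) (Set.mem_Iic.2 hjm) (by omega))
  have hY : rvcAux (m - 1) (delList (p + 1) c) (p + 1) ≤ chordSlope p q (c p) (c (q + 1)) :=
    calc rvcAux (m - 1) (delList (p + 1) c) (p + 1)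
        ≤ avg (delList (p + 1) c) (p + 1) q := rvcAux_le_avg (by omega) (by omega)
      _ = chordSlope p q (c p) (c (q + 1)) := by
        rw [avg_eq_chordSlope _ (by omega), delList_of_lt (by omega), delList_of_le (by omega)]
  rw [avg_eq_chordSlope c (Nat.lt_succ_self p)] at h
  push_cast at h
  calc rvcAux (m - 1) (delList (p + 1) c) (p + 1)
      ≤ chordSlope p q (c p) (c (q + 1)) := hY
    _ ≤ 2 * chordSlope (p + 1) (q + 1) (c (p + 1)) (c (q + 1)) :=
      chordSlope_le_two_mul_chordSlope_succ_succ (Nat.cast_nonneg p) hpq hcpq hcq (h.trans hY)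
    _ = 2 * avg c (p + 1 + 1) (q + 1) := by
      rw [avg_eq_chordSlope c (by omega)]; push_cast; rfl

lemma rvcAux_delList_le_rvcAux_succ (hc : MonotoneOn c (Set.Iic m)) {l : ℕ} (hkl : k < l)
    (hlm : l < m) : rvcAux (m - 1) (delList k c) l ≤ rvcAux m c (l + 1) := by
  refine le_rvcAux (by omega) fun j hlj hjm => ?_
  obtain ⟨p, rfl⟩ : ∃ p, l = p + 1 := ⟨l - 1, by omega⟩
  obtain ⟨q, rfl⟩ : ∃ q, j = q + 1 := ⟨j - 1, by omega⟩
  calc rvcAux (m - 1) (delList k c) (p + 1)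
      ≤ avg (delList k c) (p + 1) q := rvcAux_le_avg (by omega) (by omega)
    _ = chordSlope p q (c (p + 1)) (c (q + 1)) := by
      rw [avg_eq_chordSlope _ (by omega), delList_of_le (by omega), delList_of_le (by omega)]
    _ ≤ chordSlope (p + 1) (q + 1) (c (p + 1)) (c (q + 1)) :=
      chordSlope_le_chordSlope_succ_succ (by exact_mod_cast (by omega : p < q))
        (hc (Set.mem_Iic.2 (by omega)) (Set.mem_Iic.2 hjm) (by omega))
    _ = avg c (p + 1 + 1) (q + 1) := by
      rw [avg_eq_chordSlope c (by omega)]; push_cast; rfl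

end Comparison

section Regularized

variable {m k : ℕ} {c : ℕ → ℝ}

lemma rvc_le_two_mul_rvc_delList (hc0 : 0 ≤ c 0) (hc : MonotoneOn c (Set.Iic m))
    (hk : 1 ≤ k) (hkm : k < m) {i j : ℕ} (hi : 1 ≤ i) (him : i ≤ m)
    (hj : i < k ∧ j = i ∨ k < i ∧ j + 1 = i) :
    rvc m c i ≤ 2 * rvc (m - 1) (delList k c) j := by
  refine rvc_le hi fun l hl hli => ?_
  rcases le_or_gt l k with hlk | hkl
  · have h₁ := rvcAux_le_rvcAux_delList hc hkm hl hlk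
    have h₂ : 0 ≤ rvcAux (m - 1) (delList k c) l :=
      rvcAux_nonneg (hc0.trans (le_delList hc (by omega))) (monotoneOn_delList hc) hl (by omega)
    have h₃ := rvcAux_le_rvc (r := m - 1) (d := delList k c) hl (by omega : l ≤ j)
    linarith
  · obtain ⟨l, rfl⟩ : ∃ l', l = l' + 1 := ⟨l - 1, by omega⟩
    have h₁ :=
      rvcAux_succ_le_two_mul_rvcAux_delList hc0 hc (by omega) (by omega : k ≤ l) (by omega)
    have h₂ := rvcAux_le_rvc (r := m - 1) (d := delList k c) (by omega) (by omega : l ≤ j)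
    linarith

lemma rvc_delList_le_two_mul_rvc (hc0 : 0 ≤ c 0) (hc : MonotoneOn c (Set.Iic m))
    (hk : 1 ≤ k) (hkm : k < m) {i j : ℕ} (hi : 1 ≤ i) (him : i ≤ m)
    (hj : i < k ∧ j = i ∨ k < i ∧ j + 1 = i) :
    rvc (m - 1) (delList k c) j ≤ 2 * rvc m c i := by
  refine rvc_le (by omega) fun l hl hlj => ?_
  rcases lt_trichotomy l k with hlk | rfl | hkl
  · have h₁ := rvcAux_delList_le_two_mul_rvcAux_of_lt hc0 hc hl hlk hkm
    have h₂ := rvcAux_le_rvc (r := m) (d := c) hl (by omega : l ≤ i)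
    linarith
  · rcases le_total (rvcAux (m - 1) (delList l c) l) (2 * avg c l l) with h | h
    · have h₁ := rvcAux_delList_le_two_mul_rvcAux_of_le_avg hc0 hc hl le_rfl hkm h
      have h₂ := rvcAux_le_rvc (r := m) (d := c) hl (by omega : l ≤ i)
      linarith
    · have h₁ := rvcAux_delList_le_two_mul_rvcAux_succ hc0 hc hl hkm h
      have h₂ := rvcAux_le_rvc (r := m) (d := c) (by omega) (by omega : l + 1 ≤ i)
      linarith
  · have h₁ := rvcAux_delList_le_rvcAux_succ hc hkl (by omega)
    have h₂ := rvcAux_nonneg hc0 hc (by omega) (by omega : l + 1 ≤ m)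
    have h₃ := rvcAux_le_rvc (r := m) (d := c) (by omega) (by omega : l + 1 ≤ i)
    linarith

end Regularized

theorem stmt8_general (m k : ℕ) (hk1 : 1 ≤ k) (hkm : k ≤ m - 1)
    (c : ℕ → ℝ) (hc0 : c 0 = 0)
    (hmono : ∀ a b, a ≤ b → b ≤ m → c a ≤ c b) :
    ∀ i, 1 ≤ i → i ≤ m → i ≠ k →
      (1 / 2) * rvcDel m k c i ≤ rvc m c i ∧ rvc m c i ≤ 2 * rvcDel m k c i := by
  intro i hi him hik
  have hc : MonotoneOn c (Set.Iic m) := fun a _ b hb hab => hmono a b hab hb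
  have hj : i < k ∧ (if i < k then i else i - 1) = i ∨
      k < i ∧ (if i < k then i else i - 1) + 1 = i := by
    split_ifs <;> omega
  have up := rvc_le_two_mul_rvc_delList hc0.ge hc hk1 (by omega) hi him hj
  have down := rvc_delList_le_two_mul_rvc hc0.ge hc hk1 (by omega) hi him hj
  unfold rvcDel
  exact ⟨by linarith, up⟩

/-- deleting one cost changes the regularized virtual cost by at
most a factor of 2. -/
theorem stmt8 (m k : ℕ) (hm : 2 ≤ m) (hk1 : 1 ≤ k) (hkm : k ≤ m - 1)
    (c : ℕ → ℝ) (hc0 : c 0 = 0)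
    (hmono : ∀ a b, a ≤ b → b ≤ m → c a ≤ c b) :
    ∀ i, 1 ≤ i → i ≤ m → i ≠ k →
      (1 / 2) * rvcDel m k c i ≤ rvc m c i ∧ rvc m c i ≤ 2 * rvcDel m k c i :=
  stmt8_general m k hk1 hkm c hc0 hmono
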